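/- arXiv:2405.04243 — 3 statements merged into one kernel-verified Lean document; each statement's English description precedes it below -/
import Mathlib

section
/- For every inverse temperature β ∈ ℝ, Hermitian d×d Hamiltonians H₁ and H₂ (H₂ having orthonormal eigenbasis (|m⟩₂)), Gibbs state ρ₁ = exp(−βH₁)/Tr[exp(−βH₁)], unitaries U, V, and unital quantum channel Φ, the dephased (monitored) quantum unital Otto cycle obeys β(Tr[V Δ₂(Φ(Δ₂(U ρ₁ U†))) V† H₁] − Tr[ρ₁ H₁]) ≥ 0, where Δ₂ is the complete dephasing channel in the eigenbasis of H₂. In particular, for β ≥ 0 the dephased average heat released ⟨⟨Q_C⟩⟩ := Tr[ρ₁ H₁] − Tr[V Δ₂(Φ(Δ₂(U ρ₁ U†))) V† H₁] satisfies ⟨⟨Q_C⟩⟩ ≤ 0, so the dephased cycle can never work as a refrigerator, for any finite dimension d. -/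
/-!
The cycle `X ↦ V Δ₂ (Φ (Δ₂ (U X Uᴴ))) Vᴴ` is itself a unital channel. In the eigenbasis
of `H₁`, a unital channel with Kraus operators `Kₖ` acts on diagonal matrices through the
doubly stochastic matrix `M j i = ∑ₖ |Kₖ j i|²`, so both energies are classical averages:
`E ⬝ᵥ q` before the cycle and `E ⬝ᵥ M q` after it, where `E` is the spectrum of `H₁` and `q`
its Gibbs weights. Convexity of `exp` gives
`q j = q i e^{-β (E j - E i)} ≥ q i (1 - β (E j - E i))`; weighting by `M j i` and summing, the
two marginals of `M` turn this into `β (E ⬝ᵥ M q - E ⬝ᵥ q) ≥ 0`.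
-/

open Matrix

universe u

noncomputable def gibbsWeights {n : Type*} [Fintype n] (β : ℝ) (E : n → ℝ) : n → ℝ :=
  fun i => Real.exp (-β * E i) / ∑ k, Real.exp (-β * E k)

section GibbsWeights

variable {n : Type*} [Fintype n]

lemma gibbsWeights_nonneg (β : ℝ) (E : n → ℝ) (i : n) : 0 ≤ gibbsWeights β E i :=
  div_nonneg (Real.exp_pos _).le (Finset.sum_nonneg fun _ _ => (Real.exp_pos _).le)

lemma gibbsWeights_sub_le (β : ℝ) (E : n → ℝ) (i j : n) :
    gibbsWeights β E i - gibbsWeights β E j ≤ gibbsWeights β E i * (β * (E j - E i)) := by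
  have hratio : gibbsWeights β E j = gibbsWeights β E i * Real.exp (-(β * (E j - E i))) := by
    simp only [gibbsWeights, div_mul_eq_mul_div, ← Real.exp_add]
    ring_nf
  have hexp := Real.add_one_le_exp (-(β * (E j - E i)))
  nlinarith [gibbsWeights_nonneg β E i]

lemma gibbsWeights_zero (E : n → ℝ) : gibbsWeights 0 E = (Fintype.card n : ℝ)⁻¹ • 1 := by
  ext i
  simp [gibbsWeights, div_eq_inv_mul]

variable [DecidableEq n] {M : Matrix n n ℝ}

theorem mul_dotProduct_mulVec_gibbsWeights_sub_nonneg (hM : M ∈ doublyStochastic ℝ n)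
    (β : ℝ) (E : n → ℝ) :
    0 ≤ β * (E ⬝ᵥ (M *ᵥ gibbsWeights β E) - E ⬝ᵥ gibbsWeights β E) := by
  set q := gibbsWeights β E
  have hbalance : ∑ j, ∑ i, M j i * (q i - q j) = 0 := by
    have hin : ∑ j, ∑ i, M j i * q i = ∑ i, q i := sum_mulVec_of_mem_doublyStochastic hM
    have hout : ∑ j, ∑ i, M j i * q j = ∑ j, q j := by
      simp only [← Finset.sum_mul, sum_row_of_mem_doublyStochastic hM, one_mul]
    simp only [mul_sub, Finset.sum_sub_distrib, hin, hout, sub_self]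
  have henergy : ∑ j, ∑ i, M j i * (q i * E i) = E ⬝ᵥ q := by
    rw [dotProduct_comm]
    exact sum_mulVec_of_mem_doublyStochastic (x := q * E) hM
  calc (0 : ℝ) = ∑ j, ∑ i, M j i * (q i - q j) := hbalance.symm
    _ ≤ ∑ j, ∑ i, M j i * (q i * (β * (E j - E i))) :=
      Finset.sum_le_sum fun j _ => Finset.sum_le_sum fun i _ =>
        mul_le_mul_of_nonneg_left (gibbsWeights_sub_le β E i j)
          (nonneg_of_mem_doublyStochastic hM)
    _ = β * (∑ j, E j * ∑ i, M j i * q i - ∑ j, ∑ i, M j i * (q i * E i)) := by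
      simp only [mul_sub, Finset.mul_sum, ← Finset.sum_sub_distrib]
      exact Finset.sum_congr rfl fun j _ => Finset.sum_congr rfl fun i _ => by ring
    _ = β * (E ⬝ᵥ (M *ᵥ q) - E ⬝ᵥ q) := by
      rw [henergy]
      rfl

theorem dotProduct_gibbsWeights_le_mulVec (hM : M ∈ doublyStochastic ℝ n) {β : ℝ}
    (hβ : 0 ≤ β) (E : n → ℝ) : E ⬝ᵥ gibbsWeights β E ≤ E ⬝ᵥ (M *ᵥ gibbsWeights β E) := by
  obtain rfl | hβ := hβ.eq_or_lt
  · rw [gibbsWeights_zero, mulVec_smul, mulVec_one_of_mem_doublyStochastic hM]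
  · exact sub_nonneg.mp <| (mul_nonneg_iff_of_pos_left hβ).mp <|
      mul_dotProduct_mulVec_gibbsWeights_sub_nonneg hM β E

end GibbsWeights

lemma trace_mul_mul_mul_cycle {n α : Type*} [Fintype n] [CommSemiring α]
    (Y D W W' : Matrix n n α) :
    (Y * (W * D * W')).trace = (W' * Y * W * D).trace := by
  simp only [← mul_assoc]
  rw [trace_mul_comm]
  simp only [mul_assoc]

def IsUnitalChannel {n : Type u} [Fintype n] [DecidableEq n]
    (Φ : Matrix n n ℂ → Matrix n n ℂ) : Prop :=
  ∃ (ι : Type u) (_ : Fintype ι) (K : ι → Matrix n n ℂ),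
    ∑ k, (K k)ᴴ * K k = 1 ∧ ∑ k, K k * (K k)ᴴ = 1 ∧
      ∀ X, Φ X = ∑ k, K k * X * (K k)ᴴ

section Channel

variable {n : Type u} [Fintype n] [DecidableEq n]

lemma mul_diagonal_mul_conjTranspose_apply_self (A : Matrix n n ℂ) (p : n → ℝ) (j : n) :
    (A * diagonal (fun i => (p i : ℂ)) * Aᴴ) j j =
      ((∑ i, Complex.normSq (A j i) * p i : ℝ) : ℂ) := by
  simp only [mul_apply, diagonal_apply, conjTranspose_apply, mul_ite, mul_zero,
    Finset.sum_ite_eq', Finset.mem_univ, if_true]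
  push_cast
  refine Finset.sum_congr rfl fun i _ => ?_
  rw [mul_right_comm, Complex.star_def, Complex.mul_conj]

lemma mul_conjTranspose_apply_self (A : Matrix n n ℂ) (j : n) :
    (A * Aᴴ) j j = ((∑ i, Complex.normSq (A j i) : ℝ) : ℂ) := by
  simpa using mul_diagonal_mul_conjTranspose_apply_self A 1 j

lemma trace_conj_diagonal_mul_conj_diagonal {W : Matrix n n ℂ}
    (hW : W ∈ unitary (Matrix n n ℂ)) (p E : n → ℝ) :
    ((W * diagonal (fun i => (p i : ℂ)) * star W) *
      (W * diagonal (fun i => (E i : ℂ)) * star W)).trace = ((E ⬝ᵥ p : ℝ) : ℂ) := by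
  have hconj : star W * (W * diagonal (fun i => (p i : ℂ)) * star W) * W =
      diagonal (fun i => (p i : ℂ)) := by
    simp only [mul_assoc, Unitary.star_mul_self_of_mem hW, mul_one]
    rw [← mul_assoc, Unitary.star_mul_self_of_mem hW, one_mul]
  rw [trace_mul_mul_mul_cycle, hconj, diagonal_mul_diagonal, trace_diagonal, dotProduct]
  push_cast
  exact Finset.sum_congr rfl fun i _ => mul_comm _ _

lemma isUnitalChannel_conj {U : Matrix n n ℂ} (hU : U ∈ unitary (Matrix n n ℂ)) :
    IsUnitalChannel fun X => U * X * star U :=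
  ⟨PUnit, inferInstance, fun _ => U, by simpa [← star_eq_conjTranspose] using hU.1,
    by simpa [← star_eq_conjTranspose] using hU.2, fun X => by simp [star_eq_conjTranspose]⟩

lemma sum_vecMulVec_star_eq_one {g : n → n → ℂ}
    (hg : ∀ m m', star (g m) ⬝ᵥ g m' = if m = m' then 1 else 0) :
    ∑ m, vecMulVec (g m) (star (g m)) = 1 := by
  set A : Matrix n n ℂ := of fun m i => star (g m i)
  have hA : A * Aᴴ = 1 := by
    ext m m'
    simpa [A, mul_apply, dotProduct, one_apply] using hg m m'
  have hA' : Aᴴ * A = 1 := mul_eq_one_comm.mp hA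
  ext i j
  simpa [A, mul_apply, vecMulVec_apply, Matrix.sum_apply] using congrFun (congrFun hA' i) j

lemma isUnitalChannel_dephasing {g : n → n → ℂ}
    (hg : ∀ m m', star (g m) ⬝ᵥ g m' = if m = m' then 1 else 0) :
    IsUnitalChannel fun X =>
      ∑ m, vecMulVec (g m) (star (g m)) * X * vecMulVec (g m) (star (g m)) := by
  set P := fun m => vecMulVec (g m) (star (g m))
  have hself (m : n) : (P m)ᴴ = P m := by simp [P]
  have hidem (m : n) : P m * P m = P m := by simp [P, vecMulVec_mul_vecMulVec, hg]
  have hsum : ∑ m, (P m)ᴴ * P m = 1 := by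
    simpa [hself, hidem] using sum_vecMulVec_star_eq_one hg
  exact ⟨n, inferInstance, P, hsum, by simpa [hself] using hsum, fun X => by simp [hself, P]⟩

namespace IsUnitalChannel

variable {Φ Ψ : Matrix n n ℂ → Matrix n n ℂ}

lemma comp (hΦ : IsUnitalChannel Φ) (hΨ : IsUnitalChannel Ψ) : IsUnitalChannel (Φ ∘ Ψ) := by
  obtain ⟨ι, _, A, hA, hA', hΦA⟩ := hΦ
  obtain ⟨κ, _, B, hB, hB', hΨB⟩ := hΨ
  refine ⟨ι × κ, inferInstance, fun q => A q.1 * B q.2, ?_, ?_, fun X => ?_⟩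
  · calc ∑ q : ι × κ, (A q.1 * B q.2)ᴴ * (A q.1 * B q.2)
        = ∑ k, (B k)ᴴ * (∑ i, (A i)ᴴ * A i) * B k := by
          simp only [Fintype.sum_prod_type_right, Finset.mul_sum, Finset.sum_mul,
            conjTranspose_mul, mul_assoc]
      _ = 1 := by simpa [hA] using hB
  · calc ∑ q : ι × κ, (A q.1 * B q.2) * (A q.1 * B q.2)ᴴ
        = ∑ i, A i * (∑ k, B k * (B k)ᴴ) * (A i)ᴴ := by
          simp only [Fintype.sum_prod_type, Finset.mul_sum, Finset.sum_mul,
            conjTranspose_mul, mul_assoc]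
      _ = 1 := by simpa [hB'] using hA'
  · simp only [Function.comp_apply, hΦA, hΨB, Fintype.sum_prod_type, Finset.mul_sum,
      Finset.sum_mul, conjTranspose_mul, mul_assoc]

theorem exists_mem_doublyStochastic_trace_eq (hΦ : IsUnitalChannel Φ) :
    ∃ M ∈ doublyStochastic ℝ n, ∀ p E : n → ℝ,
      (Φ (diagonal fun i => (p i : ℂ)) * diagonal fun i => (E i : ℂ)).trace =
        ((E ⬝ᵥ (M *ᵥ p) : ℝ) : ℂ) := by
  obtain ⟨ι, _, K, hK, hK', hΦK⟩ := hΦ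
  set M : Matrix n n ℝ := of fun j i => ∑ k, Complex.normSq (K k j i)
  have hentry (p : n → ℝ) (j : n) :
      Φ (diagonal fun i => (p i : ℂ)) j j = ((M *ᵥ p) j : ℂ) := by
    simp only [hΦK, Matrix.sum_apply, mul_diagonal_mul_conjTranspose_apply_self, mulVec,
      dotProduct, M, of_apply, Finset.sum_mul]
    push_cast
    exact Finset.sum_comm
  refine ⟨M, ?_, fun p E => ?_⟩
  · refine mem_doublyStochastic_iff_sum.mpr
      ⟨fun j i => Finset.sum_nonneg fun k _ => Complex.normSq_nonneg _,
        fun j => ?_, fun i => ?_⟩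
    · have hrow := congrFun (congrFun hK' j) j
      simp only [Matrix.sum_apply, mul_conjTranspose_apply_self, one_apply_eq] at hrow
      simp only [M, of_apply]
      rw [Finset.sum_comm]
      exact_mod_cast hrow
    · have hcol := congrFun (congrFun hK i) i
      have hdiag (k : ι) :
          ((K k)ᴴ * K k) i i = ((∑ j, Complex.normSq (K k j i) : ℝ) : ℂ) := by
        simpa [Complex.star_def] using mul_conjTranspose_apply_self (K k)ᴴ i
      simp only [Matrix.sum_apply, hdiag, one_apply_eq] at hcol
      simp only [M, of_apply]
      rw [Finset.sum_comm]
      exact_mod_cast hcol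
  · simp only [trace, diag, mul_diagonal, hentry, dotProduct]
    push_cast
    exact Finset.sum_congr rfl fun j _ => mul_comm _ _

theorem exists_mem_doublyStochastic_trace_conj_eq (hΦ : IsUnitalChannel Φ)
    {W : Matrix n n ℂ} (hW : W ∈ unitary (Matrix n n ℂ)) :
    ∃ M ∈ doublyStochastic ℝ n, ∀ p E : n → ℝ,
      (Φ (W * diagonal (fun i => (p i : ℂ)) * star W) *
        (W * diagonal (fun i => (E i : ℂ)) * star W)).trace = ((E ⬝ᵥ (M *ᵥ p) : ℝ) : ℂ) := by
  have hΦW : IsUnitalChannel fun X => star W * Φ (W * X * star W) * W := by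
    have := (isUnitalChannel_conj (Unitary.star_mem hW)).comp (hΦ.comp (isUnitalChannel_conj hW))
    rwa [star_star] at this
  obtain ⟨M, hM, htr⟩ := hΦW.exists_mem_doublyStochastic_trace_eq
  exact ⟨M, hM, fun p E => (trace_mul_mul_mul_cycle _ _ _ _).trans (htr p E)⟩

end IsUnitalChannel

end Channel

section GibbsState

variable {n : Type*} [Fintype n] [DecidableEq n]

lemma exp_unitary_conj (W : unitary (Matrix n n ℂ)) (A : Matrix n n ℂ) :
    NormedSpace.exp ((W : Matrix n n ℂ) * A * star (W : Matrix n n ℂ)) =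
      W * NormedSpace.exp A * star (W : Matrix n n ℂ) := by
  simpa using Matrix.exp_units_conj (Unitary.toUnits W) A

lemma Matrix.IsHermitian.exp_real_smul {A : Matrix n n ℂ} (hA : A.IsHermitian) (t : ℝ) :
    NormedSpace.exp ((t : ℂ) • A) = (hA.eigenvectorUnitary : Matrix n n ℂ) *
      diagonal (fun i => (Real.exp (t * hA.eigenvalues i) : ℂ)) *
        star (hA.eigenvectorUnitary : Matrix n n ℂ) := by
  conv_lhs => rw [hA.spectral_theorem, Unitary.conjStarAlgAut_apply, ← smul_mul_assoc,
    ← mul_smul_comm, ← diagonal_smul, exp_unitary_conj, Matrix.exp_diagonal]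
  congr 3
  ext i
  simp [← Complex.exp_eq_exp_ℂ]

lemma Matrix.IsHermitian.gibbsState_eq {A : Matrix n n ℂ} (hA : A.IsHermitian) (β : ℝ) :
    ((NormedSpace.exp (-(β : ℂ) • A)).trace)⁻¹ • NormedSpace.exp (-(β : ℂ) • A) =
      (hA.eigenvectorUnitary : Matrix n n ℂ) *
        diagonal (fun i => (gibbsWeights β hA.eigenvalues i : ℂ)) *
          star (hA.eigenvectorUnitary : Matrix n n ℂ) := by
  set W : Matrix n n ℂ := ↑hA.eigenvectorUnitary
  rw [show -(β : ℂ) = ((-β : ℝ) : ℂ) by push_cast; rfl, hA.exp_real_smul]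
  have hZ : (W * diagonal (fun i => (Real.exp (-β * hA.eigenvalues i) : ℂ)) * star W).trace =
      ((∑ k, Real.exp (-β * hA.eigenvalues k) : ℝ) : ℂ) := by
    rw [trace_mul_cycle, Unitary.coe_star_mul_self, one_mul, trace_diagonal]
    push_cast
    rfl
  rw [hZ, ← smul_mul_assoc, ← mul_smul_comm, ← diagonal_smul]
  congr 3
  ext i
  simp [gibbsWeights, div_eq_inv_mul]

end GibbsState

theorem dephased_no_refrigerator_general
    {d : ℕ} (β : ℝ)
    (H₁ : Matrix (Fin d) (Fin d) ℂ) (hH₁ : H₁.IsHermitian)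
    (g : Fin d → (Fin d → ℂ))
    (hg : ∀ m m', star (g m) ⬝ᵥ g m' = if m = m' then 1 else 0)
    (P : Fin d → Matrix (Fin d) (Fin d) ℂ)
    (hP : ∀ m, P m = vecMulVec (g m) (star (g m)))
    (Δ₂ : Matrix (Fin d) (Fin d) ℂ → Matrix (Fin d) (Fin d) ℂ)
    (hΔ₂ : ∀ X, Δ₂ X = ∑ m, P m * X * P m)
    (ρ₁ : Matrix (Fin d) (Fin d) ℂ)
    (hρ₁ : ρ₁ = ((NormedSpace.exp (-(β : ℂ) • H₁)).trace)⁻¹ •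
        NormedSpace.exp (-(β : ℂ) • H₁))
    (U V : Matrix (Fin d) (Fin d) ℂ)
    (hU : Uᴴ * U = 1) (hU' : U * Uᴴ = 1)
    (hV : Vᴴ * V = 1) (hV' : V * Vᴴ = 1)
    {K : ℕ} (Kr : Fin K → Matrix (Fin d) (Fin d) ℂ)
    (hKr : ∑ k, (Kr k)ᴴ * Kr k = 1) (hKr' : ∑ k, Kr k * (Kr k)ᴴ = 1)
    (Φ : Matrix (Fin d) (Fin d) ℂ → Matrix (Fin d) (Fin d) ℂ)
    (hΦ : ∀ X, Φ X = ∑ k, Kr k * X * (Kr k)ᴴ) :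
    0 ≤ β * (((V * Δ₂ (Φ (Δ₂ (U * ρ₁ * Uᴴ))) * Vᴴ * H₁).trace).re - ((ρ₁ * H₁).trace).re) ∧
      (0 ≤ β →
        ((ρ₁ * H₁).trace).re - ((V * Δ₂ (Φ (Δ₂ (U * ρ₁ * Uᴴ))) * Vᴴ * H₁).trace).re ≤ 0) := by
  set W : Matrix (Fin d) (Fin d) ℂ := ↑hH₁.eigenvectorUnitary
  set E := hH₁.eigenvalues
  set q := gibbsWeights β E
  have hW : W ∈ unitary (Matrix (Fin d) (Fin d) ℂ) := hH₁.eigenvectorUnitary.2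
  have hH : H₁ = W * diagonal (fun i => (E i : ℂ)) * star W := hH₁.spectral_theorem
  have hρ : ρ₁ = W * diagonal (fun i => (q i : ℂ)) * star W :=
    hρ₁.trans (hH₁.gibbsState_eq β)
  have hΔ : IsUnitalChannel Δ₂ := by
    convert isUnitalChannel_dephasing hg using 1
    funext X
    simp only [hΔ₂, hP]
  have hΦ' : IsUnitalChannel Φ := ⟨Fin K, inferInstance, Kr, hKr, hKr', hΦ⟩
  have hcycle : IsUnitalChannel fun X => V * Δ₂ (Φ (Δ₂ (U * X * Uᴴ))) * Vᴴ :=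
    (isUnitalChannel_conj ⟨hV, hV'⟩).comp
      (hΔ.comp (hΦ'.comp (hΔ.comp (isUnitalChannel_conj ⟨hU, hU'⟩))))
  obtain ⟨M, hM, htr⟩ := hcycle.exists_mem_doublyStochastic_trace_conj_eq hW
  rw [hρ, hH, htr, trace_conj_diagonal_mul_conj_diagonal hW, Complex.ofReal_re, Complex.ofReal_re]
  exact ⟨mul_dotProduct_mulVec_gibbsWeights_sub_nonneg hM β E,
    fun hβ => sub_nonpos.mpr (dotProduct_gibbsWeights_le_mulVec hM hβ E)⟩

/-- For every inverse temperature `β ∈ ℝ`, Hermitian Hamiltonians `H₁`, `H₂`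
(the latter with orthonormal eigenbasis `g m`, eigenvalues `ν₂ m` and spectral
projectors `P m = |g m⟩⟨g m|`), Gibbs state `ρ₁ = exp (−β H₁) / Tr (exp (−β H₁))`, unitaries
`U, V` and unital quantum channel `Φ`, the dephased (monitored) quantum unital Otto cycle obeys
`β (Tr[V Δ₂(Φ(Δ₂(U ρ₁ Uᴴ))) Vᴴ H₁] − Tr[ρ₁ H₁]) ≥ 0`, where `Δ₂ X = ∑ m, P m * X * P m` is the
complete dephasing channel in the eigenbasis of `H₂`.  In particular, for `β ≥ 0` the dephased
average heat released `⟨⟨Q_C⟩⟩ := Tr[ρ₁ H₁] − Tr[V Δ₂(Φ(Δ₂(U ρ₁ Uᴴ))) Vᴴ H₁]` satisfies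
`⟨⟨Q_C⟩⟩ ≤ 0`: the dephased cycle can never work as a refrigerator, in any finite dimension. -/
theorem dephased_no_refrigerator
    {d : ℕ} (hd : 1 ≤ d) (β : ℝ)
    (H₁ H₂ : Matrix (Fin d) (Fin d) ℂ) (hH₁ : H₁.IsHermitian) (hH₂ : H₂.IsHermitian)
    (g : Fin d → (Fin d → ℂ))
    (hg : ∀ m m', star (g m) ⬝ᵥ g m' = if m = m' then 1 else 0)
    (ν₂ : Fin d → ℝ)
    (P : Fin d → Matrix (Fin d) (Fin d) ℂ)
    (hP : ∀ m, P m = vecMulVec (g m) (star (g m)))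
    (hspec : H₂ = ∑ m, (ν₂ m : ℂ) • P m)
    (Δ₂ : Matrix (Fin d) (Fin d) ℂ → Matrix (Fin d) (Fin d) ℂ)
    (hΔ₂ : ∀ X, Δ₂ X = ∑ m, P m * X * P m)
    (ρ₁ : Matrix (Fin d) (Fin d) ℂ)
    (hρ₁ : ρ₁ = ((NormedSpace.exp (-(β : ℂ) • H₁)).trace)⁻¹ •
        NormedSpace.exp (-(β : ℂ) • H₁))
    (U V : Matrix (Fin d) (Fin d) ℂ)
    (hU : Uᴴ * U = 1) (hU' : U * Uᴴ = 1)
    (hV : Vᴴ * V = 1) (hV' : V * Vᴴ = 1)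
    {K : ℕ} (Kr : Fin K → Matrix (Fin d) (Fin d) ℂ)
    (hKr : ∑ k, (Kr k)ᴴ * Kr k = 1) (hKr' : ∑ k, Kr k * (Kr k)ᴴ = 1)
    (Φ : Matrix (Fin d) (Fin d) ℂ → Matrix (Fin d) (Fin d) ℂ)
    (hΦ : ∀ X, Φ X = ∑ k, Kr k * X * (Kr k)ᴴ) :
    0 ≤ β * (((V * Δ₂ (Φ (Δ₂ (U * ρ₁ * Uᴴ))) * Vᴴ * H₁).trace).re - ((ρ₁ * H₁).trace).re) ∧
      (0 ≤ β →
        ((ρ₁ * H₁).trace).re - ((V * Δ₂ (Φ (Δ₂ (U * ρ₁ * Uᴴ))) * Vᴴ * H₁).trace).re ≤ 0) :=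
  dephased_no_refrigerator_general β H₁ hH₁ g hg P hP Δ₂ hΔ₂ ρ₁ hρ₁ U V hU hU' hV hV' Kr hKr hKr' Φ
    hΦ
end

section
/- Integral fluctuation theorem for the dephased engine: with H₁ = Σ_n ν_n^{(1)} Π_n^{(1)} and H₂ = Σ_m ν_m^{(2)} Π_m^{(2)} spectral decompositions into rank-one orthogonal projectors onto orthonormal eigenbases, ρ₁ = exp(−βH₁)/Tr[exp(−βH₁)], U, V unitary, Φ a unital quantum channel, and stochastic-cycle probabilities p_{n,m,k,l} = Tr[Π_l^{(1)} V Π_k^{(2)} Φ(Π_m^{(2)} U Π_n^{(1)} ρ₁ Π_n^{(1)} U† Π_m^{(2)}) Π_k^{(2)} V†], one has Σ_{n,m,k,l} e^{β(ν_n^{(1)} − ν_l^{(1)})} p_{n,m,k,l} = 1. -/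
/-!
Sandwiching the Gibbs state between the eigenprojectors of `H₁` gives `P₁ n ρ₁ P₁ n = w n • P₁ n`
with Gibbs weights `w n ∝ e^{-β ν₁ n}`, and the reweighting factor `e^{β (ν₁ n - ν₁ l)}` turns
`w n` into `w l`. Summing over `l` then rebuilds `ρ₁ = ∑ l, w l • P₁ l`, so the left-hand side is
`Tr[ρ₁ X]`, where `X` is the image of `∑ n, P₁ n = 1` under the composite of conjugation by `U`,
dephasing in the eigenbasis of `H₂`, the channel `Φ`, dephasing again and conjugation by `V`.
Each of these maps is unital, so `X = 1` and the sum is `Tr ρ₁ = 1`.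
-/

open Matrix

namespace OrthogonalIdempotents

variable {R A ι : Type*} [CommSemiring R] [Semiring A] [Algebra R A] [Fintype ι] {e : ι → A}

theorem mul_sum_smul (he : OrthogonalIdempotents e) (c : ι → R) (i : ι) :
    e i * ∑ j, c j • e j = c i • e i := by
  classical
  simp [Finset.mul_sum, he.mul_eq]

end OrthogonalIdempotents

namespace CompleteOrthogonalIdempotents

variable {ι : Type*} [Fintype ι]

theorem sum_smul_pow {R A : Type*} [CommSemiring R] [Semiring A] [Algebra R A] {e : ι → A}
    (he : CompleteOrthogonalIdempotents e) (c : ι → R) (k : ℕ) :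
    (∑ i, c i • e i) ^ k = ∑ i, c i ^ k • e i := by
  induction k with
  | zero => simpa using he.complete.symm
  | succ k ih =>
    rw [pow_succ', ih, Finset.sum_mul]
    refine Finset.sum_congr rfl fun i _ => ?_
    rw [smul_mul_assoc, he.mul_sum_smul, smul_smul, pow_succ']

theorem exp_sum_smul {A : Type*} [Ring A] [Algebra ℂ A] [TopologicalSpace A]
    [IsTopologicalRing A] [T2Space A] [ContinuousSMul ℂ A] {e : ι → A}
    (he : CompleteOrthogonalIdempotents e) (c : ι → ℂ) :
    NormedSpace.exp (∑ i, c i • e i) = ∑ i, Complex.exp (c i) • e i := by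
  have hseries : HasSum (fun k : ℕ => ∑ i, ((k.factorial : ℂ)⁻¹ * c i ^ k) • e i)
      (∑ i, Complex.exp (c i) • e i) := by
    refine hasSum_sum fun i _ => HasSum.smul_const ?_ (e i)
    simpa [Complex.exp_eq_exp_ℂ] using NormedSpace.exp_series_hasSum_exp' (𝕂 := ℂ) (c i)
  rw [NormedSpace.exp_eq_tsum ℂ, ← hseries.tsum_eq]
  simp_rw [he.sum_smul_pow, Finset.smul_sum, smul_smul]

end CompleteOrthogonalIdempotents

section OrthonormalVectors

variable {R n : Type*} [CommRing R] [StarRing R] [Fintype n] [DecidableEq n] {e : n → n → R}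

theorem sum_vecMulVec_star_self_eq_one
    (he : ∀ i j, star (e i) ⬝ᵥ e j = if i = j then 1 else 0) :
    ∑ i, vecMulVec (e i) (star (e i)) = 1 := by
  let E : Matrix n n R := of fun a i => e i a
  have hE : Eᴴ * E = 1 := by
    ext i j
    simpa [E, mul_apply, dotProduct, one_apply] using he i j
  calc ∑ i, vecMulVec (e i) (star (e i)) = E * Eᴴ := by
        ext a b
        simp [E, mul_apply, Matrix.sum_apply, vecMulVec_apply]
    _ = 1 := mul_eq_one_comm.mp hE

theorem completeOrthogonalIdempotents_vecMulVec_star_self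
    (he : ∀ i j, star (e i) ⬝ᵥ e j = if i = j then 1 else 0) :
    CompleteOrthogonalIdempotents fun i => vecMulVec (e i) (star (e i)) := by
  refine CompleteOrthogonalIdempotents.iff_ortho_complete.mpr
    ⟨fun i j hij => ?_, sum_vecMulVec_star_self_eq_one he⟩
  simp [vecMulVec_mul_vecMulVec, he, hij]

theorem trace_vecMulVec_star_self
    (he : ∀ i j, star (e i) ⬝ᵥ e j = if i = j then 1 else 0) (i : n) :
    trace (vecMulVec (e i) (star (e i))) = 1 := by
  rw [trace_vecMulVec, dotProduct_comm, he, if_pos rfl]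

end OrthonormalVectors

section Gibbs

variable {ι : Type*} [Fintype ι]

noncomputable def gibbsWeight (β : ℝ) (ν : ι → ℝ) (i : ι) : ℝ :=
  Real.exp (-(β * ν i)) / ∑ j, Real.exp (-(β * ν j))

theorem sum_gibbsWeight [Nonempty ι] (β : ℝ) (ν : ι → ℝ) : ∑ i, gibbsWeight β ν i = 1 := by
  simp only [gibbsWeight, ← Finset.sum_div]
  exact div_self (Finset.sum_pos (fun _ _ => Real.exp_pos _) Finset.univ_nonempty).ne'

theorem exp_mul_gibbsWeight (β : ℝ) (ν : ι → ℝ) (i j : ι) :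
    Real.exp (β * (ν i - ν j)) * gibbsWeight β ν i = gibbsWeight β ν j := by
  rw [gibbsWeight, gibbsWeight, mul_div_assoc', ← Real.exp_add]
  ring_nf

theorem trace_inv_smul_exp_eq_sum_gibbsWeight_smul {n : Type*} [Fintype n]
    [DecidableEq n] {P : ι → Matrix n n ℂ} (hP : CompleteOrthogonalIdempotents P)
    (htr : ∀ i, trace (P i) = 1) (β : ℝ) (ν : ι → ℝ) :
    (trace (NormedSpace.exp (-(β : ℂ) • ∑ i, (ν i : ℂ) • P i)))⁻¹ •
        NormedSpace.exp (-(β : ℂ) • ∑ i, (ν i : ℂ) • P i) =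
      ∑ i, (gibbsWeight β ν i : ℂ) • P i := by
  have hexp : NormedSpace.exp (-(β : ℂ) • ∑ i, (ν i : ℂ) • P i) =
      ∑ i, (Real.exp (-(β * ν i)) : ℂ) • P i := by
    simp only [Finset.smul_sum, smul_smul, hP.exp_sum_smul]
    push_cast
    simp only [neg_mul]
  rw [hexp]
  simp only [trace_sum, trace_smul, htr, smul_eq_mul, mul_one, Finset.smul_sum, smul_smul,
    gibbsWeight]
  push_cast
  simp only [div_eq_inv_mul]

end Gibbs

section Channels

variable (R : Type*) {A ι : Type*} [CommSemiring R] [Semiring A] [StarRing A] [Algebra R A]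
  [Fintype ι]

noncomputable def krausMap (K : ι → A) : A →ₗ[R] A :=
  ∑ i, LinearMap.mulLeft R (K i) ∘ₗ LinearMap.mulRight R (star (K i))

variable {R}

theorem krausMap_apply (K : ι → A) (x : A) : krausMap R K x = ∑ i, K i * x * star (K i) := by
  simp [krausMap, mul_assoc]

theorem krausMap_one {K : ι → A} (hK : ∑ i, K i * star (K i) = 1) : krausMap R K 1 = 1 := by
  simpa [krausMap_apply] using hK

end Channels

theorem sum_dephased_cycle_eq_one {A F ι κ : Type*} [Semiring A] [FunLike F A A]
    [AddMonoidHomClass F A A] [Fintype ι] [Fintype κ] {P : ι → A} {Q : κ → A}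
    (hP : ∑ n, P n = 1) (hQ : CompleteOrthogonalIdempotents Q) {u u' v v' : A}
    (hu : u * u' = 1) (hv : v * v' = 1) (Φ : F) (hΦ : Φ 1 = 1) :
    ∑ n, ∑ m, ∑ k, v * Q k * Φ (Q m * u * P n * u' * Q m) * Q k * v' = 1 := by
  have hQQ : ∑ k, Q k * Q k = 1 := by simpa [(hQ.idem _).eq] using hQ.complete
  calc ∑ n, ∑ m, ∑ k, v * Q k * Φ (Q m * u * P n * u' * Q m) * Q k * v'
      = v * (∑ k, Q k * Φ (∑ m, Q m * (u * (∑ n, P n) * u') * Q m) * Q k) * v' := by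
        rw [Finset.sum_comm_cycle]
        simp only [Finset.mul_sum, Finset.sum_mul, map_sum, mul_assoc]
        exact Finset.sum_congr rfl fun _ _ => Finset.sum_comm
    _ = 1 := by simp only [hP, mul_one, hu, hQQ, hΦ, hv]

theorem sum_mul_trace_dephased_cycle_eq_one {R D ι κ : Type*} [CommRing R] [Fintype D]
    [DecidableEq D] [Fintype ι] [Fintype κ] {P : ι → Matrix D D R} {Q : κ → Matrix D D R}
    (hP : CompleteOrthogonalIdempotents P) (htr : ∀ i, trace (P i) = 1)
    (hQ : CompleteOrthogonalIdempotents Q) {w : ι → R} (hw : ∑ i, w i = 1)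
    {g : ι → ι → R} (hg : ∀ i j, g i j * w i = w j) {U U' V V' : Matrix D D R}
    (hU : U * U' = 1) (hV : V * V' = 1) (Φ : Matrix D D R →ₗ[R] Matrix D D R) (hΦ : Φ 1 = 1) :
    ∑ n, ∑ m, ∑ k, ∑ l, g n l * trace (P l * V * Q k *
      Φ (Q m * U * P n * (∑ i, w i • P i) * P n * U' * Q m) * Q k * V') = 1 := by
  set ρ := ∑ i, w i • P i
  set X := fun n m k => V * Q k * Φ (Q m * U * P n * U' * Q m) * Q k * V'
  have hsandwich : ∀ n, P n * ρ * P n = w n • P n := fun n => by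
    rw [hP.mul_sum_smul, smul_mul_assoc, (hP.idem n).eq]
  have hterm : ∀ n m k l, g n l * trace (P l * V * Q k *
      Φ (Q m * U * P n * ρ * P n * U' * Q m) * Q k * V') = w l * trace (P l * X n m k) := by
    intro n m k l
    have hinner : Q m * U * P n * ρ * P n * U' * Q m = w n • (Q m * U * P n * U' * Q m) := by
      rw [show Q m * U * P n * ρ * P n * U' * Q m = Q m * U * (P n * ρ * P n) * U' * Q m by
        simp only [mul_assoc], hsandwich]
      simp only [mul_smul_comm, smul_mul_assoc]
    rw [hinner, map_smul, ← hg n l]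
    simp only [X, mul_smul_comm, smul_mul_assoc, trace_smul, smul_eq_mul, mul_assoc]
  calc _ = ∑ n, ∑ m, ∑ k, ∑ l, w l * trace (P l * X n m k) := by simp only [hterm]
    _ = ∑ n, ∑ m, ∑ k, trace (ρ * X n m k) := by
        simp only [ρ, Finset.sum_mul, trace_sum, smul_mul_assoc, trace_smul, smul_eq_mul]
    _ = trace (ρ * ∑ n, ∑ m, ∑ k, X n m k) := by simp only [Finset.mul_sum, trace_sum]
    _ = 1 := by
        rw [sum_dephased_cycle_eq_one hP.complete hQ hU hV Φ hΦ, mul_one]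
        simp [ρ, trace_sum, trace_smul, htr, hw]

theorem dephased_integral_fluctuation_theorem_general
    {d : ℕ} (hd : 1 ≤ d) (β : ℝ)
    (H₁ : Matrix (Fin d) (Fin d) ℂ)
    (e f : Fin d → (Fin d → ℂ))
    (he : ∀ n n', star (e n) ⬝ᵥ e n' = if n = n' then 1 else 0)
    (hf : ∀ m m', star (f m) ⬝ᵥ f m' = if m = m' then 1 else 0)
    (ν₁ : Fin d → ℝ)
    (P₁ P₂ : Fin d → Matrix (Fin d) (Fin d) ℂ)
    (hP₁ : ∀ n, P₁ n = vecMulVec (e n) (star (e n)))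
    (hP₂ : ∀ m, P₂ m = vecMulVec (f m) (star (f m)))
    (hspec₁ : H₁ = ∑ n, (ν₁ n : ℂ) • P₁ n)
    (ρ₁ : Matrix (Fin d) (Fin d) ℂ)
    (hρ₁ : ρ₁ = ((NormedSpace.exp (-(β : ℂ) • H₁)).trace)⁻¹ •
        NormedSpace.exp (-(β : ℂ) • H₁))
    (U V : Matrix (Fin d) (Fin d) ℂ)
    (hU' : U * Uᴴ = 1)
    (hV' : V * Vᴴ = 1)
    {K : ℕ} (Kr : Fin K → Matrix (Fin d) (Fin d) ℂ)
    (hKr' : ∑ k, Kr k * (Kr k)ᴴ = 1)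
    (Φ : Matrix (Fin d) (Fin d) ℂ → Matrix (Fin d) (Fin d) ℂ)
    (hΦ : ∀ X, Φ X = ∑ k, Kr k * X * (Kr k)ᴴ)
    (p : Fin d → Fin d → Fin d → Fin d → ℂ)
    (hp : ∀ n m k l, p n m k l =
      (P₁ l * V * P₂ k * Φ (P₂ m * U * P₁ n * ρ₁ * P₁ n * Uᴴ * P₂ m) * P₂ k * Vᴴ).trace) :
    ∑ n, ∑ m, ∑ k, ∑ l, (Real.exp (β * (ν₁ n - ν₁ l)) : ℂ) * p n m k l = 1 := by
  have : Nonempty (Fin d) := ⟨⟨0, hd⟩⟩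
  have hP : CompleteOrthogonalIdempotents P₁ := by
    rw [funext hP₁]; exact completeOrthogonalIdempotents_vecMulVec_star_self he
  have hQ : CompleteOrthogonalIdempotents P₂ := by
    rw [funext hP₂]; exact completeOrthogonalIdempotents_vecMulVec_star_self hf
  have htr : ∀ n, trace (P₁ n) = 1 := fun n => hP₁ n ▸ trace_vecMulVec_star_self he n
  have hρ : ρ₁ = ∑ n, (gibbsWeight β ν₁ n : ℂ) • P₁ n := by
    rw [hρ₁, hspec₁]
    exact trace_inv_smul_exp_eq_sum_gibbsWeight_smul hP htr β ν₁
  obtain rfl : Φ = krausMap ℂ Kr := funext fun X => (hΦ X).trans (krausMap_apply Kr X).symm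
  simp only [hp, hρ]
  exact sum_mul_trace_dephased_cycle_eq_one hP htr hQ (by exact_mod_cast sum_gibbsWeight β ν₁)
    (fun n l => by exact_mod_cast exp_mul_gibbsWeight β ν₁ n l) hU' hV' _ (krausMap_one hKr')

/-- Integral fluctuation theorem for the dephased engine: with
`H₁ = ∑ n, ν₁ n • P₁ n` and `H₂ = ∑ m, ν₂ m • P₂ m` spectral decompositions into rank-one
orthogonal projectors onto orthonormal eigenbases, `ρ₁ = exp (−β H₁) / Tr (exp (−β H₁))`,
`U, V` unitary, `Φ` a unital quantum channel, and stochastic-cycle probabilities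
`p n m k l = Tr[P₁ l * V * P₂ k * Φ (P₂ m * U * P₁ n * ρ₁ * P₁ n * Uᴴ * P₂ m) * P₂ k * Vᴴ]`,
one has `∑ n m k l, e^{β (ν₁ n − ν₁ l)} * p n m k l = 1`. -/
theorem dephased_integral_fluctuation_theorem
    {d : ℕ} (hd : 1 ≤ d) (β : ℝ)
    (H₁ H₂ : Matrix (Fin d) (Fin d) ℂ)
    (e f : Fin d → (Fin d → ℂ))
    (he : ∀ n n', star (e n) ⬝ᵥ e n' = if n = n' then 1 else 0)
    (hf : ∀ m m', star (f m) ⬝ᵥ f m' = if m = m' then 1 else 0)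
    (ν₁ ν₂ : Fin d → ℝ)
    (P₁ P₂ : Fin d → Matrix (Fin d) (Fin d) ℂ)
    (hP₁ : ∀ n, P₁ n = vecMulVec (e n) (star (e n)))
    (hP₂ : ∀ m, P₂ m = vecMulVec (f m) (star (f m)))
    (hspec₁ : H₁ = ∑ n, (ν₁ n : ℂ) • P₁ n)
    (hspec₂ : H₂ = ∑ m, (ν₂ m : ℂ) • P₂ m)
    (ρ₁ : Matrix (Fin d) (Fin d) ℂ)
    (hρ₁ : ρ₁ = ((NormedSpace.exp (-(β : ℂ) • H₁)).trace)⁻¹ •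
        NormedSpace.exp (-(β : ℂ) • H₁))
    (U V : Matrix (Fin d) (Fin d) ℂ)
    (hU : Uᴴ * U = 1) (hU' : U * Uᴴ = 1)
    (hV : Vᴴ * V = 1) (hV' : V * Vᴴ = 1)
    {K : ℕ} (Kr : Fin K → Matrix (Fin d) (Fin d) ℂ)
    (hKr : ∑ k, (Kr k)ᴴ * Kr k = 1) (hKr' : ∑ k, Kr k * (Kr k)ᴴ = 1)
    (Φ : Matrix (Fin d) (Fin d) ℂ → Matrix (Fin d) (Fin d) ℂ)
    (hΦ : ∀ X, Φ X = ∑ k, Kr k * X * (Kr k)ᴴ)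
    (p : Fin d → Fin d → Fin d → Fin d → ℂ)
    (hp : ∀ n m k l, p n m k l =
      (P₁ l * V * P₂ k * Φ (P₂ m * U * P₁ n * ρ₁ * P₁ n * Uᴴ * P₂ m) * P₂ k * Vᴴ).trace) :
    ∑ n, ∑ m, ∑ k, ∑ l, (Real.exp (β * (ν₁ n - ν₁ l)) : ℂ) * p n m k l = 1 :=
  dephased_integral_fluctuation_theorem_general hd β H₁ e f he hf ν₁ P₁ P₂ hP₁ hP₂ hspec₁ ρ₁ hρ₁ U V
    hU' hV' Kr hKr' Φ hΦ p hp
end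

section
/- Variance of the undephased heat released: in the qubit Otto setup, Tr[H₁ V Φ(U H₁ ρ₁ U†) V†] = ν₁²(1 − 2ζᶜ); consequently the variance of the stochastic heat released of the undephased engine is ⟨Q_C²⟩_c = 2ν₁² − 2Tr[H₁ V Φ(U H₁ ρ₁ U†) V†] − ⟨Q_C⟩² = 4ζᶜν₁² − ⟨Q_C⟩², where ⟨Q_C⟩ = −2ζᶜν₁ tanh(βν₁). -/
open Matrix


lemma vmv_mul_vmv (a b c d : Fin 2 → ℂ) :
    vecMulVec a b * vecMulVec c d = (b ⬝ᵥ c) • vecMulVec a d := by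
  ext i j
  simp [Matrix.mul_apply, vecMulVec_apply, dotProduct, Finset.sum_mul, Finset.mul_sum]
  ring

lemma trace_vmv_mul (a b : Fin 2 → ℂ) (X : Matrix (Fin 2) (Fin 2) ℂ) :
    (vecMulVec a b * X).trace = b ⬝ᵥ (X *ᵥ a) := by
  simp [Matrix.trace, Matrix.diag, Matrix.mul_apply, vecMulVec_apply, dotProduct,
    Matrix.mulVec, Finset.mul_sum]
  ring

lemma trace_vmv (a b : Fin 2 → ℂ) : (vecMulVec a b).trace = b ⬝ᵥ a := by
  simp [Matrix.trace, Matrix.diag, vecMulVec_apply, dotProduct, mul_comm]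

lemma onb_complete (ep em : Fin 2 → ℂ)
    (hep : star ep ⬝ᵥ ep = 1) (hem : star em ⬝ᵥ em = 1) (hepm : star ep ⬝ᵥ em = 0) :
    vecMulVec ep (star ep) + vecMulVec em (star em) = 1 := by
  have hmp : star em ⬝ᵥ ep = 0 := by
    rw [Matrix.star_dotProduct, hepm, star_zero]
  have hWW : (!![star ep 0, star ep 1; star em 0, star em 1] :
      Matrix (Fin 2) (Fin 2) ℂ) * (!![star ep 0, star ep 1; star em 0, star em 1])ᴴ = 1 := by
    ext i j
    fin_cases i <;> fin_cases j <;>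
      simp_all [Matrix.mul_apply, Matrix.conjTranspose_apply, dotProduct,
        Fin.sum_univ_two, Matrix.one_apply, mul_comm]
  have hW' := mul_eq_one_comm.mp hWW
  ext i j
  have h := congrFun (congrFun hW' i) j
  fin_cases i <;> fin_cases j <;>
    simp_all [Matrix.mul_apply, Matrix.conjTranspose_apply, Fin.sum_univ_two,
      vecMulVec_apply, Matrix.one_apply]

/-- Variance of the undephased heat released: in the qubit Otto setup,
`Tr[H₁ V Φ(U H₁ ρ₁ Uᴴ) Vᴴ] = ν₁² (1 − 2ζᶜ)`; consequently the variance of the stochastic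
heat released of the undephased engine is
`⟨Q_C²⟩_c = 2ν₁² − 2 Tr[H₁ V Φ(U H₁ ρ₁ Uᴴ) Vᴴ] − ⟨Q_C⟩² = 4 ζᶜ ν₁² − ⟨Q_C⟩²`,
where `⟨Q_C⟩ = −2 ζᶜ ν₁ tanh(βν₁)`. -/
theorem undephased_QC_variance_qubit
    (β ν₁ ν₂ : ℝ) (hβ : 0 < β) (hν₁ : 0 < ν₁) (hν₂ : 0 < ν₂)
    (ep em fp fm : Fin 2 → ℂ)
    (hep : star ep ⬝ᵥ ep = 1) (hem : star em ⬝ᵥ em = 1) (hepm : star ep ⬝ᵥ em = 0)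
    (hfp : star fp ⬝ᵥ fp = 1) (hfm : star fm ⬝ᵥ fm = 1) (hfpm : star fp ⬝ᵥ fm = 0)
    (H₁ H₂ ρ₁ : Matrix (Fin 2) (Fin 2) ℂ)
    (hH₁ : H₁ = (ν₁ : ℂ) • (vecMulVec ep (star ep) - vecMulVec em (star em)))
    (hH₂ : H₂ = (ν₂ : ℂ) • (vecMulVec fp (star fp) - vecMulVec fm (star fm)))
    (hρ₁ : ρ₁ = ((2 * Real.cosh (β * ν₁) : ℝ) : ℂ)⁻¹ •
        ((Real.exp (-(β * ν₁)) : ℂ) • vecMulVec ep (star ep) +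
         (Real.exp (β * ν₁) : ℂ) • vecMulVec em (star em)))
    (U V : Matrix (Fin 2) (Fin 2) ℂ)
    (hU : Uᴴ * U = 1) (hU' : U * Uᴴ = 1)
    (hV : Vᴴ * V = 1) (hV' : V * Vᴴ = 1)
    {K : ℕ} (Kr : Fin K → Matrix (Fin 2) (Fin 2) ℂ)
    (hKr : ∑ k, (Kr k)ᴴ * Kr k = 1) (hKr' : ∑ k, Kr k * (Kr k)ᴴ = 1)
    (Φ : Matrix (Fin 2) (Fin 2) ℂ → Matrix (Fin 2) (Fin 2) ℂ)
    (hΦ : ∀ X, Φ X = ∑ k, Kr k * X * (Kr k)ᴴ)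
    (ζc : ℂ) (hζc : ζc = star em ⬝ᵥ ((V * Φ (U * vecMulVec ep (star ep) * Uᴴ) * Vᴴ) *ᵥ em))
    (QC : ℂ) (hQC : QC = -2 * ζc * (ν₁ : ℂ) * (Real.tanh (β * ν₁) : ℂ)) :
    (H₁ * V * Φ (U * H₁ * ρ₁ * Uᴴ) * Vᴴ).trace = (ν₁ : ℂ) ^ 2 * (1 - 2 * ζc) ∧
    2 * (ν₁ : ℂ) ^ 2 - 2 * (H₁ * V * Φ (U * H₁ * ρ₁ * Uᴴ) * Vᴴ).trace - QC ^ 2 =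
        4 * ζc * (ν₁ : ℂ) ^ 2 - QC ^ 2 := by
  have main : (H₁ * V * Φ (U * H₁ * ρ₁ * Uᴴ) * Vᴴ).trace = (ν₁ : ℂ) ^ 2 * (1 - 2 * ζc) := by
    set P := vecMulVec ep (star ep) with hPdef
    set Q := vecMulVec em (star em) with hQdef
    set a : ℂ := (Real.exp (-(β * ν₁)) : ℂ) with hadef
    set b : ℂ := (Real.exp (β * ν₁) : ℂ) with hbdef
    set c : ℂ := ((2 * Real.cosh (β * ν₁) : ℝ) : ℂ) with hcdef
    have hc0 : c ≠ 0 := by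
      simp only [hcdef, Complex.ofReal_ne_zero]
      positivity
    have hab : a + b = c := by
      simp only [hadef, hbdef, hcdef]
      push_cast [Real.cosh_eq]
      ring
    -- channel properties
    have hΦadd : ∀ X Y, Φ (X + Y) = Φ X + Φ Y := fun X Y => by
      simp [hΦ, Matrix.mul_add, Matrix.add_mul, Finset.sum_add_distrib]
    have hΦsmul : ∀ (s : ℂ) X, Φ (s • X) = s • Φ X := fun s X => by
      simp [hΦ, Matrix.mul_smul, Matrix.smul_mul, Finset.smul_sum]
    have hΦsub : ∀ X Y, Φ (X - Y) = Φ X - Φ Y := fun X Y => by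
      simp [hΦ, Matrix.mul_sub, Matrix.sub_mul, Finset.sum_sub_distrib]
    have hΦ1 : Φ 1 = 1 := by rw [hΦ]; simpa using hKr'
    have htr : ∀ X, (Φ X).trace = X.trace := fun X => by
      rw [hΦ, Matrix.trace_sum]
      calc ∑ k, (Kr k * X * (Kr k)ᴴ).trace
          = ∑ k, ((Kr k)ᴴ * Kr k * X).trace :=
            Finset.sum_congr rfl fun k _ => Matrix.trace_mul_cycle _ _ _
        _ = ((∑ k, (Kr k)ᴴ * Kr k) * X).trace := by rw [Finset.sum_mul, Matrix.trace_sum]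
        _ = X.trace := by rw [hKr, Matrix.one_mul]
    -- projections
    have hmp : star em ⬝ᵥ ep = 0 := by rw [Matrix.star_dotProduct, hepm, star_zero]
    have hPP : P * P = P := by rw [hPdef, vmv_mul_vmv, hep, one_smul]
    have hQQ : Q * Q = Q := by rw [hQdef, vmv_mul_vmv, hem, one_smul]
    have hPQ : P * Q = 0 := by rw [hPdef, hQdef, vmv_mul_vmv, hepm, zero_smul]
    have hQP : Q * P = 0 := by rw [hPdef, hQdef, vmv_mul_vmv, hmp, zero_smul]
    have hPQ1 : P + Q = 1 := onb_complete ep em hep hem hepm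
    -- H₁ρ₁
    have hHρ : H₁ * ρ₁ = ((ν₁ : ℂ) * c⁻¹) • (a • P - b • Q) := by
      rw [hH₁, hρ₁]
      simp only [Matrix.smul_mul, Matrix.mul_smul, Matrix.sub_mul, Matrix.mul_add,
        hPP, hPQ, hQP, hQQ, smul_zero, add_zero, zero_add]
      module
    -- the conjugated channel outputs
    set A : Matrix (Fin 2) (Fin 2) ℂ := V * (Φ (U * P * Uᴴ) * Vᴴ) with hAdef
    set B : Matrix (Fin 2) (Fin 2) ℂ := V * (Φ (U * Q * Uᴴ) * Vᴴ) with hBdef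
    have hζc' : star em ⬝ᵥ (A *ᵥ em) = ζc := by
      rw [hζc, hAdef, Matrix.mul_assoc V (Φ (U * P * Uᴴ)) Vᴴ]
    have hAB : A + B = 1 := by
      rw [hAdef, hBdef, ← Matrix.mul_add, ← Matrix.add_mul, ← hΦadd]
      have : U * P * Uᴴ + U * Q * Uᴴ = 1 := by
        rw [← Matrix.add_mul, ← Matrix.mul_add, hPQ1, Matrix.mul_one, hU']
      rw [this, hΦ1, Matrix.one_mul, hV']
    have htrA : A.trace = 1 := by
      rw [hAdef, ← Matrix.mul_assoc, Matrix.trace_mul_cycle, hV,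
        Matrix.one_mul, htr, Matrix.trace_mul_cycle, hU,
        Matrix.one_mul, hPdef, trace_vmv, hep]
    -- scalar entries
    have htQA : (Q * A).trace = ζc := by rw [hQdef, trace_vmv_mul, hζc']
    have htPA : (P * A).trace = 1 - ζc := by
      have h1 : (P * A).trace + (Q * A).trace = A.trace := by
        rw [← Matrix.trace_add, ← Matrix.add_mul, hPQ1, Matrix.one_mul]
      rw [htQA, htrA] at h1
      linear_combination h1
    have htrP : P.trace = 1 := by rw [hPdef, trace_vmv, hep]
    have htrQ : Q.trace = 1 := by rw [hQdef, trace_vmv, hem]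
    have htPB : (P * B).trace = ζc := by
      have h2 : P * A + P * B = P := by rw [← Matrix.mul_add, hAB, Matrix.mul_one]
      have h3 := congrArg Matrix.trace h2
      rw [Matrix.trace_add, htPA, htrP] at h3
      linear_combination h3
    have htQB : (Q * B).trace = 1 - ζc := by
      have h2 : Q * A + Q * B = Q := by rw [← Matrix.mul_add, hAB, Matrix.mul_one]
      have h3 := congrArg Matrix.trace h2
      rw [Matrix.trace_add, htQA, htrQ] at h3
      linear_combination h3
    have harg : U * H₁ * ρ₁ * Uᴴ =
        ((ν₁ : ℂ) * c⁻¹) • (a • (U * P * Uᴴ) - b • (U * Q * Uᴴ)) := by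
      rw [Matrix.mul_assoc U H₁ ρ₁, hHρ]
      simp only [Matrix.mul_smul, Matrix.smul_mul, Matrix.mul_sub, Matrix.sub_mul]
    have hexp : H₁ * V * Φ (U * H₁ * ρ₁ * Uᴴ) * Vᴴ =
        ((ν₁ : ℂ) * ((ν₁ : ℂ) * c⁻¹)) •
          ((a • (P * A) - b • (P * B)) - (a • (Q * A) - b • (Q * B))) := by
      rw [harg, hΦsmul, hΦsub, hΦsmul, hΦsmul, hH₁, hAdef, hBdef]
      simp only [Matrix.mul_smul, Matrix.smul_mul, Matrix.mul_sub, Matrix.sub_mul,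
        Matrix.mul_assoc]
      module
    rw [hexp]
    simp only [Matrix.trace_smul, Matrix.trace_sub, smul_eq_mul, htPA, htPB, htQA, htQB]
    field_simp
    linear_combination ((ν₁ : ℂ) ^ 2 * (1 - 2 * ζc)) * hab
  refine ⟨main, ?_⟩
  rw [main]; ring
end
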